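/- arXiv:1711.04041 — 3 statements merged into one kernel-verified Lean document; each statement's English description precedes it below -/
import Mathlib

section
/- Let ψ : ℝ → ℝ be four times continuously differentiable on a neighborhood of a point ϑ* with ψ'(ϑ*) = 0 and ψ''(ϑ*) > 0, and set ζ* := ψ(ϑ*). Suppose Φ is defined on an interval (ζ*, ζ* + δ) with δ > 0, satisfies ψ(Φ(s)) = s and Φ(s) > ϑ* for all s ∈ (ζ*, ζ* + δ), and Φ(s) → ϑ* as s → ζ* from the right. Define A₁ := √(2/ψ''(ϑ*)), A₂ := −ψ'''(ϑ*)/(3 ψ''(ϑ*)²), and A₃ := (5/(18√2)) · ψ'''(ϑ*)²/ψ''(ϑ*)^{7/2} − (1/(6√2)) · ψ⁽⁴⁾(ϑ*)/ψ''(ϑ*)^{5/2}. Then, as s → ζ* from the right, Φ(s) = ϑ* + A₁ (s − ζ*)^{1/2} + A₂ (s − ζ*) + A₃ (s − ζ*)^{3/2} + o((s − ζ*)^{3/2}). -/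
open Real Filter Set Topology Nat

/-!
Put `t = Φ s - ϑ*` and `g t = ψ (ϑ* + t) - ζ*`, so that `s - ζ* = g t`. Taylor's theorem gives
`g t = t² p t` with `p t = a² + β t + γ t² + o(t²)`, where `a² = ψ''/2`, `β = ψ'''/6`,
`γ = ψ⁗/24`, hence `√(s - ζ*) = t √(p t)` and the claim reduces to the limit of
`(1 - √p / a + β t p / (2 a⁴)) / (t² √p³)`. Rationalising `√p - a` twice, using
`p = a² + β t + H t²` with `H → γ`, turns this quotient into a rational function of
`(t, √p, H)` that is continuous at `(0, a, γ)`, so its limit is read off by evaluation.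
-/

theorem tendsto_taylor_remainder_div_pow {f : ℝ → ℝ} {a : ℝ} {n : ℕ} {U : Set ℝ}
    (hU : U ∈ 𝓝 a) (hf : ContDiffOn ℝ n f U) :
    Tendsto (fun x => (f x - ∑ k ∈ Finset.range (n + 1),
        iteratedDeriv k f a / k ! * (x - a) ^ k) / (x - a) ^ n) (𝓝 a) (𝓝 0) := by
  obtain ⟨r, hr, hball⟩ := Metric.mem_nhds_iff.1 hU
  have hopen : IsOpen (Metric.ball a r) := Metric.isOpen_ball
  have hcenter : a ∈ Metric.ball a r := Metric.mem_ball_self hr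
  have h := Real.taylor_tendsto (convex_ball a r) hcenter (hf.mono hball)
  rw [hopen.nhdsWithin_eq hcenter] at h
  refine h.congr fun x => ?_
  simp only [taylor_within_apply, smul_eq_mul, iteratedDerivWithin_of_isOpen hopen hcenter]
  congr 2
  exact Finset.sum_congr rfl fun k _ => by ring

theorem sqrt_inversion_remainder_eq {a β H t v : ℝ} (ha : 0 < a) (ht : t ≠ 0) (hv : 0 ≤ v)
    (hv2 : v ^ 2 = a ^ 2 + β * t + H * t ^ 2) :
    (1 - v / a + β * t * v ^ 2 / (2 * a ^ 4)) / t ^ 2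
      = (β * (β + H * t) * (v ^ 2 + 2 * v * a + 2 * a ^ 2) - 2 * a ^ 3 * H * (v + a))
        / (2 * a ^ 4 * (v + a) ^ 2) := by
  have hnum : 1 - v / a + β * t * v ^ 2 / (2 * a ^ 4)
      = (2 * a ^ 4 - 2 * a ^ 3 * v + β * t * v ^ 2) / (2 * a ^ 4) := by
    field_simp
  rw [hnum, div_div, div_eq_div_iff (by positivity) (by positivity)]
  linear_combination
    (2 * a ^ 4 * (β * t * (v ^ 2 + 2 * v * a + 2 * a ^ 2) - 2 * a ^ 3 * (v + a))) * hv2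

theorem tendsto_of_tendsto_sub_div_sq {p : ℝ → ℝ} {c β γ : ℝ}
    (hp : Tendsto (fun t => (p t - c - β * t) / t ^ 2) (𝓝[≠] 0) (𝓝 γ)) :
    Tendsto p (𝓝[≠] 0) (𝓝 c) := by
  have hid : Tendsto (fun t : ℝ => t) (𝓝[≠] 0) (𝓝 0) :=
    tendsto_nhdsWithin_of_tendsto_nhds tendsto_id
  have hlim := (tendsto_const_nhds (x := c)).add ((hid.const_mul β).add (hp.mul (hid.pow 2)))
  simp only [mul_zero, add_zero, ne_eq, OfNat.ofNat_ne_zero, not_false_eq_true, zero_pow] at hlim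
  refine hlim.congr' ?_
  filter_upwards [self_mem_nhdsWithin] with t (ht : t ≠ 0)
  field_simp
  ring

theorem tendsto_sqrt_inversion_remainder {a β γ : ℝ} (ha : 0 < a) {p : ℝ → ℝ}
    (hp : Tendsto (fun t => (p t - a ^ 2 - β * t) / t ^ 2) (𝓝[≠] 0) (𝓝 γ)) :
    Tendsto (fun t => (1 - √(p t) / a + β * t * p t / (2 * a ^ 4)) / (t ^ 2 * √(p t) ^ 3))
      (𝓝[≠] 0) (𝓝 (5 * β ^ 2 / (8 * a ^ 7) - γ / (2 * a ^ 5))) := by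
  set H := fun t => (p t - a ^ 2 - β * t) / t ^ 2
  have hid : Tendsto (fun t : ℝ => t) (𝓝[≠] 0) (𝓝 0) :=
    tendsto_nhdsWithin_of_tendsto_nhds tendsto_id
  have hpH : ∀ᶠ t in 𝓝[≠] 0, p t = a ^ 2 + β * t + H t * t ^ 2 := by
    filter_upwards [self_mem_nhdsWithin] with t (ht : t ≠ 0)
    simp only [H]
    field_simp
    ring
  have hp_lim := tendsto_of_tendsto_sub_div_sq hp
  have hsqrt : Tendsto (fun t => √(p t)) (𝓝[≠] 0) (𝓝 a) := by
    simpa [ha.le] using hp_lim.sqrt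
  have hF : ContinuousAt (fun q : ℝ × ℝ × ℝ =>
      (β * (β + q.2.2 * q.1) * (q.2.1 ^ 2 + 2 * q.2.1 * a + 2 * a ^ 2)
        - 2 * a ^ 3 * q.2.2 * (q.2.1 + a)) / (2 * a ^ 4 * (q.2.1 + a) ^ 2) / q.2.1 ^ 3)
      (0, a, γ) := by
    fun_prop (disch := positivity)
  have hlim := hF.tendsto.comp (hid.prodMk_nhds (hsqrt.prodMk_nhds hp))
  have hval : (β * (β + γ * 0) * (a ^ 2 + 2 * a * a + 2 * a ^ 2) - 2 * a ^ 3 * γ * (a + a))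
      / (2 * a ^ 4 * (a + a) ^ 2) / a ^ 3 = 5 * β ^ 2 / (8 * a ^ 7) - γ / (2 * a ^ 5) := by
    field_simp
    ring
  rw [hval] at hlim
  refine hlim.congr' ?_
  filter_upwards [self_mem_nhdsWithin, hpH, hp_lim.eventually (eventually_gt_nhds (by positivity))]
    with t (ht : t ≠ 0) hpt hpos
  have hsq : √(p t) ^ 2 = a ^ 2 + β * t + H t * t ^ 2 := by rw [sq_sqrt hpos.le, hpt]
  have key := sqrt_inversion_remainder_eq ha ht (sqrt_nonneg _) hsq
  rw [sq_sqrt hpos.le] at key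
  simp only [Function.comp_apply]
  rw [sq_sqrt hpos.le, ← key, div_div]

theorem sq_rpow_natCast_div_two {y : ℝ} (hy : 0 ≤ y) (n : ℕ) :
    (y ^ 2) ^ ((n : ℝ) / 2) = y ^ n := by
  rw [← rpow_natCast y 2, ← rpow_mul hy, ← rpow_natCast]
  congr 1
  push_cast
  ring

theorem third_inverse_coeff_eq {a : ℝ} (ha : 0 < a) (c d : ℝ) :
    5 / (18 * √2) * c ^ 2 / (2 * a ^ 2) ^ ((7 : ℝ) / 2)
        - 1 / (6 * √2) * d / (2 * a ^ 2) ^ ((5 : ℝ) / 2)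
      = 5 * (c / 6) ^ 2 / (8 * a ^ 7) - d / 24 / (2 * a ^ 5) := by
  have hs : √2 ^ 2 = 2 := sq_sqrt zero_le_two
  have hs8 : √2 ^ 8 = 16 := by rw [show 8 = 2 * 4 by rfl, pow_mul, hs]; norm_num
  have h7 := sq_rpow_natCast_div_two (by positivity : 0 ≤ √2 * a) 7
  have h5 := sq_rpow_natCast_div_two (by positivity : 0 ≤ √2 * a) 5
  push_cast at h7 h5
  rw [show 2 * a ^ 2 = (√2 * a) ^ 2 by rw [mul_pow, hs], h7, h5]
  field_simp
  linear_combination (5184 * a ^ 2 * d - 4320 * c ^ 2) * hs8 - 41472 * a ^ 2 * d * hs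

theorem tendsto_inverse_expansion_of_taylor {b c d A₁ A₂ A₃ : ℝ} {g : ℝ → ℝ}
    (hb : 0 < b)
    (hg : Tendsto (fun t => (g t - b / 2 * t ^ 2 - c / 6 * t ^ 3 - d / 24 * t ^ 4) / t ^ 4)
      (𝓝[≠] 0) (𝓝 0))
    (hA₁ : A₁ = √(2 / b)) (hA₂ : A₂ = -c / (3 * b ^ 2))
    (hA₃ : A₃ = 5 / (18 * √2) * c ^ 2 / b ^ ((7 : ℝ) / 2)
      - 1 / (6 * √2) * d / b ^ ((5 : ℝ) / 2)) :
    Tendsto (fun t => (t - (A₁ * √(g t) + A₂ * g t + A₃ * g t ^ ((3 : ℝ) / 2)))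
      / g t ^ ((3 : ℝ) / 2)) (𝓝[>] 0) (𝓝 0) := by
  obtain ⟨a, ha, rfl⟩ : ∃ a, 0 < a ∧ b = 2 * a ^ 2 :=
    ⟨√(b / 2), by positivity, by rw [sq_sqrt (by positivity)]; ring⟩
  have hA₁' : A₁ = 1 / a := by
    rw [hA₁, show 2 / (2 * a ^ 2) = (1 / a) ^ 2 by field_simp, sqrt_sq (by positivity)]
  rw [third_inverse_coeff_eq ha] at hA₃
  set p := fun t => g t / t ^ 2
  have hp : Tendsto (fun t => (p t - a ^ 2 - c / 6 * t) / t ^ 2) (𝓝[≠] 0) (𝓝 (d / 24)) := by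
    have hg' := hg.add_const (d / 24)
    rw [zero_add] at hg'
    refine hg'.congr' ?_
    filter_upwards [self_mem_nhdsWithin] with t (ht : t ≠ 0)
    simp only [p]
    field_simp
    ring
  have hlim :=
    ((tendsto_sqrt_inversion_remainder ha hp).mono_left (nhdsGT_le_nhdsNE 0)).sub_const A₃
  rw [← hA₃, sub_self] at hlim
  refine hlim.congr' ?_
  have hp_lim := (tendsto_of_tendsto_sub_div_sq hp).mono_left (nhdsGT_le_nhdsNE 0)
  filter_upwards [self_mem_nhdsWithin, hp_lim.eventually (eventually_gt_nhds (by positivity))]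
    with t (ht : 0 < t) hpos
  have hv : 0 < √(p t) := sqrt_pos.2 hpos
  have hsq : √(p t) ^ 2 = p t := sq_sqrt hpos.le
  have hg_eq : g t = (t * √(p t)) ^ 2 := by
    rw [mul_pow, hsq]
    simp only [p]
    field_simp
  rw [hg_eq, sqrt_sq (by positivity), show (3 : ℝ) / 2 = ((3 : ℕ) : ℝ) / 2 by norm_num,
    sq_rpow_natCast_div_two (by positivity), hA₁', hA₂]
  field_simp
  linear_combination (-6 * c * t) * hsq

/-- Third-order expansion of the right inverse `Φ` of `ψ` around the minimizer `ϑ*`: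
`Φ(s) = ϑ* + A₁ (s−ζ*)^{1/2} + A₂ (s−ζ*) + A₃ (s−ζ*)^{3/2} + o((s−ζ*)^{3/2})`
as `s → ζ*` from the right. -/
theorem inverse_third_order_expansion
    (ψ Φ : ℝ → ℝ) (ϑstar ζstar δ A₁ A₂ A₃ : ℝ) (hδ : 0 < δ)
    (hsmooth : ∃ U ∈ nhds ϑstar, ContDiffOn ℝ 4 ψ U)
    (hderiv : iteratedDeriv 1 ψ ϑstar = 0)
    (hderiv2 : 0 < iteratedDeriv 2 ψ ϑstar)
    (hζ : ζstar = ψ ϑstar)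
    (hΦinv : ∀ s ∈ Ioo ζstar (ζstar + δ), ψ (Φ s) = s)
    (hΦgt : ∀ s ∈ Ioo ζstar (ζstar + δ), ϑstar < Φ s)
    (hΦlim : Tendsto Φ (nhdsWithin ζstar (Ioi ζstar)) (nhds ϑstar))
    (hA₁ : A₁ = Real.sqrt (2 / iteratedDeriv 2 ψ ϑstar))
    (hA₂ : A₂ = -(iteratedDeriv 3 ψ ϑstar) / (3 * (iteratedDeriv 2 ψ ϑstar) ^ 2))
    (hA₃ : A₃ = (5 / (18 * Real.sqrt 2)) * (iteratedDeriv 3 ψ ϑstar) ^ 2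
          / (iteratedDeriv 2 ψ ϑstar) ^ ((7 : ℝ) / 2)
        - (1 / (6 * Real.sqrt 2)) * iteratedDeriv 4 ψ ϑstar
          / (iteratedDeriv 2 ψ ϑstar) ^ ((5 : ℝ) / 2)) :
    Tendsto
      (fun s => (Φ s - (ϑstar + A₁ * Real.sqrt (s - ζstar) + A₂ * (s - ζstar)
          + A₃ * (s - ζstar) ^ ((3 : ℝ) / 2))) / (s - ζstar) ^ ((3 : ℝ) / 2))
      (nhdsWithin ζstar (Ioi ζstar)) (nhds 0) := by
  have hT : Tendsto (fun t => (ψ (ϑstar + t) - ζstar - iteratedDeriv 2 ψ ϑstar / 2 * t ^ 2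
      - iteratedDeriv 3 ψ ϑstar / 6 * t ^ 3 - iteratedDeriv 4 ψ ϑstar / 24 * t ^ 4) / t ^ 4)
      (𝓝[≠] 0) (𝓝 0) := by
    obtain ⟨U, hU, hψ⟩ := hsmooth
    have hshift : Tendsto (fun t => ϑstar + t) (𝓝[≠] 0) (𝓝 ϑstar) :=
      tendsto_nhdsWithin_of_tendsto_nhds ((continuous_const_add ϑstar).tendsto' 0 _ (add_zero _))
    refine ((tendsto_taylor_remainder_div_pow hU hψ).comp hshift).congr fun t => ?_
    simp only [Function.comp_apply, add_sub_cancel_left, Finset.sum_range_succ,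
      Finset.sum_range_zero, iteratedDeriv_zero, hderiv, hζ, factorial]
    ring
  have hIoo : Ioo ζstar (ζstar + δ) ∈ 𝓝[>] ζstar := Ioo_mem_nhdsGT (by linarith)
  have hΦt : Tendsto (fun s => Φ s - ϑstar) (𝓝[>] ζstar) (𝓝[>] 0) := by
    refine tendsto_nhdsWithin_iff.2 ⟨by simpa using hΦlim.sub_const ϑstar, ?_⟩
    filter_upwards [hIoo] with s hs using sub_pos.2 (hΦgt s hs)
  refine ((tendsto_inverse_expansion_of_taylor hderiv2 hT hA₁ hA₂ hA₃).comp hΦt).congr' ?_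
  filter_upwards [hIoo] with s hs
  simp only [Function.comp_apply, add_sub_cancel, hΦinv s hs]
  ring
end

section
/- Let ψ : ℝ → ℝ be four times continuously differentiable on a neighborhood of a point ϑ* with ψ'(ϑ*) = 0 and ψ''(ϑ*) > 0. Define A₁ := √(2/ψ''(ϑ*)), A₂ := −ψ'''(ϑ*)/(3 ψ''(ϑ*)²), and A₃ := (5/(18√2)) · ψ'''(ϑ*)²/ψ''(ϑ*)^{7/2} − (1/(6√2)) · ψ⁽⁴⁾(ϑ*)/ψ''(ϑ*)^{5/2}. Then, as ϑ → ϑ* from the right, ϑ − ϑ* = A₁ √(ψ(ϑ) − ψ(ϑ*)) + A₂ (ψ(ϑ) − ψ(ϑ*)) + A₃ (ψ(ϑ) − ψ(ϑ*))^{3/2} + o((ϑ − ϑ*)³). -/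
/-!
Write `h = ϑ - ϑ*` and `Δ = ψ ϑ - ψ ϑ*`. Taylor's theorem gives `Δ = h² (a + h (b + Q h))` with
`a = ψ''/2`, `b = ψ'''/6` and `Q → c = ψ⁗/24`, so `√Δ = √a · h · r` with
`r = √(1 + h (b/a + (Q/a) h)) → 1`. In these terms `A₁ = 1/√a` and `A₂ = -b/(2a²)`, and since
`r² - 1` is an explicit multiple of `h`, the quotient `(h - (A₁ √Δ + A₂ Δ + A₃ Δ^{3/2})) / h³` is
exactly a continuous expression in `(h, r, Q/a)`. Its value at `(0, 1, c/a)` is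
`5b²/(8a²) - c/(2a) - A₃ a^{3/2}`, which is zero.
-/

open Real Filter Set Topology

theorem Real.taylor_tendsto_of_mem_nhds {f : ℝ → ℝ} {x₀ : ℝ} {n : ℕ} {U : Set ℝ}
    (hU : U ∈ 𝓝 x₀) (hf : ContDiffOn ℝ n f U) :
    Tendsto (fun x => (f x - ∑ k ∈ Finset.range (n + 1),
      iteratedDeriv k f x₀ / k.factorial * (x - x₀) ^ k) / (x - x₀) ^ n) (𝓝 x₀) (𝓝 0) := by
  obtain ⟨ε, hε, hball⟩ := Metric.mem_nhds_iff.mp hU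
  have hT := Real.taylor_tendsto (convex_ball x₀ ε) (Metric.mem_ball_self hε) (hf.mono hball)
  rw [nhdsWithin_eq_nhds.mpr (Metric.ball_mem_nhds x₀ hε)] at hT
  refine hT.congr fun x => ?_
  rw [taylor_within_apply]
  congr 2
  refine Finset.sum_congr rfl fun k hk => ?_
  have hk : (k : WithTop ℕ∞) ≤ n := by exact_mod_cast Finset.mem_range_succ_iff.mp hk
  rw [iteratedDerivWithin_eq_iteratedDeriv Metric.isOpen_ball.uniqueDiffOn
    ((hf.contDiffAt hU).of_le hk) (Metric.mem_ball_self hε), smul_eq_mul]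
  ring

theorem taylor_four_tendsto_of_deriv_eq_zero {f : ℝ → ℝ} {x₀ : ℝ} {U : Set ℝ} (hU : U ∈ 𝓝 x₀)
    (hf : ContDiffOn ℝ 4 f U) (hf₁ : iteratedDeriv 1 f x₀ = 0) :
    Tendsto (fun x => (f x - f x₀ - iteratedDeriv 2 f x₀ / 2 * (x - x₀) ^ 2
      - iteratedDeriv 3 f x₀ / 6 * (x - x₀) ^ 3) / (x - x₀) ^ 4) (𝓝[≠] x₀)
      (𝓝 (iteratedDeriv 4 f x₀ / 24)) := by
  have := ((Real.taylor_tendsto_of_mem_nhds (n := 4) hU hf).mono_left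
    (nhdsWithin_le_nhds (s := {x₀}ᶜ))).add_const (iteratedDeriv 4 f x₀ / 24)
  rw [zero_add] at this
  refine this.congr' ?_
  filter_upwards [self_mem_nhdsWithin] with x (hx : x ≠ x₀)
  have : x - x₀ ≠ 0 := sub_ne_zero.mpr hx
  simp only [Finset.sum_range_succ, Finset.sum_range_zero, hf₁, iteratedDeriv_zero,
    Nat.factorial]
  field_simp
  ring

/- Both `1 - r` and `r³ + r² - 2` are multiples of `r - 1 = h P / (r + 1)`,
where `P = p + Q h`. -/
theorem inversion_identity {h r p Q K : ℝ} (hh : h ≠ 0) (hr : 0 ≤ r)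
    (hr2 : r ^ 2 = 1 + h * (p + Q * h)) :
    (h - (h * r - p / 2 * (h * r) ^ 2 + K * (h * r) ^ 3)) / h ^ 3
      = (p * (p + Q * h) * (r ^ 2 + 2 * r + 2) / (2 * (r + 1)) - Q) / (r + 1) - K * r ^ 3 := by
  have hr1 : r + 1 ≠ 0 := by positivity
  field_simp
  linear_combination (-2 * (r + 1) + p * h * (r ^ 2 + 2 * r + 2)) * hr2

theorem inverted_expansion_quotient_eq {a b h r Q Δ A₁ A₂ A₃ : ℝ} (ha : 0 < a) (hh : 0 < h)
    (hr : 0 ≤ r) (hr2 : r ^ 2 = 1 + h * (b / a + Q * h)) (hΔ : Δ = a * (h * r) ^ 2)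
    (hA₁ : A₁ * √a = 1) (hA₂ : A₂ = -b / (2 * a ^ 2)) :
    (h - (A₁ * √Δ + A₂ * Δ + A₃ * Δ ^ ((3 : ℝ) / 2))) / h ^ 3
      = (b / a * (b / a + Q * h) * (r ^ 2 + 2 * r + 2) / (2 * (r + 1)) - Q) / (r + 1)
        - A₃ * √a ^ 3 * r ^ 3 := by
  have hsqrt : √Δ = √a * (h * r) := by
    rw [hΔ, Real.sqrt_mul ha.le, Real.sqrt_sq (by positivity)]
  have h32 : Δ ^ ((3 : ℝ) / 2) = √a ^ 3 * (h * r) ^ 3 := by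
    rw [Real.rpow_div_two_eq_sqrt _ (hΔ ▸ by positivity), hsqrt]
    norm_cast
    ring
  rw [hsqrt, h32, hΔ, hA₂, ← inversion_identity hh.ne' hr hr2]
  congr 2
  rw [← mul_assoc, hA₁]
  field_simp
  ring

theorem tendsto_inverted_expansion {α : Type*} {l : Filter α} {h Δ : α → ℝ}
    {a b c A₁ A₂ A₃ : ℝ} (ha : 0 < a) (hh : Tendsto h l (𝓝[>] 0))
    (hΔ : Tendsto (fun x => (Δ x - a * h x ^ 2 - b * h x ^ 3) / h x ^ 4) l (𝓝 c))
    (hA₁ : A₁ * √a = 1) (hA₂ : A₂ = -b / (2 * a ^ 2))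
    (hA₃ : A₃ * √a ^ 3 = 5 * b ^ 2 / (8 * a ^ 2) - c / (2 * a)) :
    Tendsto (fun x => (h x - (A₁ * √(Δ x) + A₂ * Δ x + A₃ * Δ x ^ ((3 : ℝ) / 2))) / h x ^ 3)
      l (𝓝 0) := by
  obtain ⟨h0, hpos⟩ := tendsto_nhdsWithin_iff.mp hh
  set Q := fun x => (Δ x - a * h x ^ 2 - b * h x ^ 3) / h x ^ 4 / a
  set X := fun x => 1 + h x * (b / a + Q x * h x)
  have hX : Tendsto X l (𝓝 1) := by
    have := (((hΔ.div_const a).mul h0).const_add (b / a)).mul h0 |>.const_add 1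
    simp only [mul_zero, add_zero] at this
    exact this.congr fun x => by simp only [X, Q]; ring
  set r := fun x => √(X x)
  have hr : Tendsto r l (𝓝 1) := by simpa using hX.sqrt
  have hlim : Tendsto (fun x => (b / a * (b / a + Q x * h x) * (r x ^ 2 + 2 * r x + 2)
      / (2 * (r x + 1)) - Q x) / (r x + 1) - A₃ * √a ^ 3 * r x ^ 3) l (𝓝 0) := by
    have hG : ContinuousAt (fun z : ℝ × ℝ × ℝ => (b / a * (b / a + z.2.2 * z.1)
        * (z.2.1 ^ 2 + 2 * z.2.1 + 2) / (2 * (z.2.1 + 1)) - z.2.2) / (z.2.1 + 1)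
        - A₃ * √a ^ 3 * z.2.1 ^ 3) (0, 1, c / a) := by
      fun_prop (disch := norm_num)
    convert hG.tendsto.comp (h0.prodMk_nhds (hr.prodMk_nhds (hΔ.div_const a))) using 2
    · rfl
    · norm_num [hA₃]
      field_simp
      ring
  refine hlim.congr' ?_
  filter_upwards [hpos, hX.eventually (lt_mem_nhds one_pos)] with x (hx : 0 < h x) hXx
  have hr2 : r x ^ 2 = X x := Real.sq_sqrt hXx.le
  refine (inverted_expansion_quotient_eq ha hx (Real.sqrt_nonneg _) hr2 ?_ hA₁ hA₂).symm
  rw [mul_pow, hr2]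
  simp only [X, Q]
  field_simp
  ring

theorem third_coeff_mul_sqrt_half_pow_three {d₂ : ℝ} (d₃ d₄ : ℝ) (hd : 0 < d₂) :
    (5 / (18 * √2) * d₃ ^ 2 / d₂ ^ ((7 : ℝ) / 2) - 1 / (6 * √2) * d₄ / d₂ ^ ((5 : ℝ) / 2))
        * √(d₂ / 2) ^ 3
      = 5 * (d₃ / 6) ^ 2 / (8 * (d₂ / 2) ^ 2) - d₄ / 24 / (2 * (d₂ / 2)) := by
  rw [rpow_div_two_eq_sqrt _ hd.le, rpow_div_two_eq_sqrt _ hd.le, sqrt_div' _ zero_le_two]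
  norm_cast
  have hs : d₂ = √d₂ ^ 2 := (sq_sqrt hd.le).symm
  have hs0 : √d₂ ≠ 0 := (sqrt_pos.mpr hd).ne'
  have h4 : √2 ^ 4 = 4 := by rw [show 4 = 2 * 2 from rfl, pow_mul, sq_sqrt zero_le_two]; norm_num
  generalize √d₂ = s at hs hs0 ⊢
  subst hs
  field_simp
  rw [h4]
  ring

/-- Inverted Taylor expansion at the minimizer `ϑ*` of `ψ`:
`ϑ − ϑ* = A₁ √(ψ(ϑ)−ψ(ϑ*)) + A₂ (ψ(ϑ)−ψ(ϑ*)) + A₃ (ψ(ϑ)−ψ(ϑ*))^{3/2} + o((ϑ−ϑ*)³)`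
as `ϑ → ϑ*` from the right. -/
theorem inverted_taylor_expansion
    (ψ : ℝ → ℝ) (ϑstar A₁ A₂ A₃ : ℝ)
    (hsmooth : ∃ U ∈ nhds ϑstar, ContDiffOn ℝ 4 ψ U)
    (hderiv : iteratedDeriv 1 ψ ϑstar = 0)
    (hderiv2 : 0 < iteratedDeriv 2 ψ ϑstar)
    (hA₁ : A₁ = Real.sqrt (2 / iteratedDeriv 2 ψ ϑstar))
    (hA₂ : A₂ = -(iteratedDeriv 3 ψ ϑstar) / (3 * (iteratedDeriv 2 ψ ϑstar) ^ 2))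
    (hA₃ : A₃ = (5 / (18 * Real.sqrt 2)) * (iteratedDeriv 3 ψ ϑstar) ^ 2
          / (iteratedDeriv 2 ψ ϑstar) ^ ((7 : ℝ) / 2)
        - (1 / (6 * Real.sqrt 2)) * iteratedDeriv 4 ψ ϑstar
          / (iteratedDeriv 2 ψ ϑstar) ^ ((5 : ℝ) / 2)) :
    Tendsto
      (fun ϑ => (ϑ - ϑstar - (A₁ * Real.sqrt (ψ ϑ - ψ ϑstar) + A₂ * (ψ ϑ - ψ ϑstar)
          + A₃ * (ψ ϑ - ψ ϑstar) ^ ((3 : ℝ) / 2))) / (ϑ - ϑstar) ^ 3)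
      (nhdsWithin ϑstar (Ioi ϑstar)) (nhds 0) := by
  obtain ⟨U, hU, hψU⟩ := hsmooth
  have hsub : Tendsto (fun ϑ => ϑ - ϑstar) (𝓝[>] ϑstar) (𝓝[>] 0) := by
    rw [Tendsto, map_subRight_nhdsGT, sub_self]
  have htaylor := (taylor_four_tendsto_of_deriv_eq_zero hU hψU hderiv).mono_left
    (nhdsWithin_mono ϑstar fun _ => ne_of_gt)
  refine tendsto_inverted_expansion (by positivity) hsub htaylor ?_ ?_ ?_
  · rw [hA₁, ← Real.sqrt_mul (by positivity)]
    field_simp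
    simp
  · rw [hA₂]
    field_simp
    ring
  · rw [hA₃]
    exact third_coeff_mul_sqrt_half_pow_three _ _ hderiv2
end

section
/- Let ϑ*, ζ*, B₁, B₂, B₃ be real numbers, let α, β ≥ 0, and let ψ̂ : ℝ → ℝ be three times continuously differentiable on a neighborhood of α + ϑ* and differentiable at 0, with ψ̂(α + ϑ*) ≠ 0, ψ̂(α + β) ≠ 0 and ψ̂(β) ≠ ζ*. Let Φ̂ be a real-valued function on an interval (ζ*, ζ* + δ), δ > 0, satisfying, as ϑ → ζ* from the right, Φ̂(ϑ) = ϑ* + B₁ (ϑ − ζ*)^{1/2} + B₂ (ϑ − ζ*) + B₃ (ϑ − ζ*)^{3/2} + o((ϑ − ζ*)^{3/2}). Define L(ϑ) := (ψ̂'(0)/(ϑ − ψ̂(β))) · ( (α + β)/ψ̂(α + β) − (α + Φ̂(ϑ))/ψ̂(α + Φ̂(ϑ)) ). Then there exist real numbers C₂ and C₃ such that, as ϑ → ζ* from the right, L(ϑ) = C₀ + C₁ (ϑ − ζ*)^{1/2} + C₂ (ϑ − ζ*) + C₃ (ϑ − ζ*)^{3/2} + o((ϑ − ζ*)^{3/2}),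 where C₀ = ( (α + β)/ψ̂(α + β) − (α + ϑ*)/ψ̂(α + ϑ*) ) · ψ̂'(0)/(ζ* − ψ̂(β)) and C₁ = −ψ̂'(0) B₁ (ψ̂(α + ϑ*) − (α + ϑ*) ψ̂'(α + ϑ*)) / (ψ̂(α + ϑ*)² (ζ* − ψ̂(β))). -/
/-!
Substitute `ϑ = ζ* + s²`. The hypothesis on `Φ̂` and the claim on `L` then become ordinary cubic
expansions `c₀ + c₁ s + c₂ s² + c₃ s³ + o(s³)` as `s → 0⁺`. Such expansions are closed under sums
and products, and under composition with `C³` functions by the Peano form of Taylor's theorem. Now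
`L(ζ* + s²) = P(s²) · (K − G(Φ̂(ζ* + s²)))` with `P x = ψ̂'(0)/(ζ* + x − ψ̂(β))`,
`K = (α + β)/ψ̂(α + β)` and `G x = (α + x)/ψ̂(α + x)`. Since `s²` has no linear term, the constant
and linear coefficients of the product are `P(0) (K − G(ϑ*))` and `−P(0) G'(ϑ*) B₁`, i.e. `C₀` and
`C₁`.
-/

open Real Filter Set Asymptotics Topology

def HasCubicExpansion (l : Filter ℝ) (f : ℝ → ℝ) (c₀ c₁ c₂ c₃ : ℝ) : Prop :=
  (fun s => f s - (c₀ + c₁ * s + c₂ * s ^ 2 + c₃ * s ^ 3)) =o[l] fun s => s ^ 3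

theorem hasCubicExpansion_const (l : Filter ℝ) (c : ℝ) :
    HasCubicExpansion l (fun _ => c) c 0 0 0 := by
  simp [HasCubicExpansion]

theorem hasCubicExpansion_sq (l : Filter ℝ) :
    HasCubicExpansion l (fun s => s ^ 2) 0 0 1 0 := by
  simp [HasCubicExpansion]

theorem isLittleO_pow_four_mul {l : Filter ℝ} (hl : l ≤ 𝓝 0) {R : ℝ → ℝ} (hR : ContinuousAt R 0) :
    (fun s => s ^ 4 * R s) =o[l] fun s => s ^ 3 := by
  have hsR : (fun s => s * R s) =o[l] fun _ => (1 : ℝ) := by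
    rw [isLittleO_one_iff]
    refine Tendsto.mono_left ?_ hl
    simpa using (continuousAt_id.fun_mul hR).tendsto
  exact ((isBigO_refl (fun s : ℝ => s ^ 3) l).mul_isLittleO hsR).congr
    (fun s => by ring) (fun s => by ring)

namespace HasCubicExpansion

variable {l : Filter ℝ} {f g : ℝ → ℝ} {a₀ a₁ a₂ a₃ b₀ b₁ b₂ b₃ : ℝ}

theorem add (hf : HasCubicExpansion l f a₀ a₁ a₂ a₃) (hg : HasCubicExpansion l g b₀ b₁ b₂ b₃) :
    HasCubicExpansion l (fun s => f s + g s) (a₀ + b₀) (a₁ + b₁) (a₂ + b₂) (a₃ + b₃) :=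
  (IsLittleO.add hf hg).congr_left fun s => by ring

theorem sub (hf : HasCubicExpansion l f a₀ a₁ a₂ a₃) (hg : HasCubicExpansion l g b₀ b₁ b₂ b₃) :
    HasCubicExpansion l (fun s => f s - g s) (a₀ - b₀) (a₁ - b₁) (a₂ - b₂) (a₃ - b₃) :=
  (IsLittleO.sub hf hg).congr_left fun s => by ring

theorem const_mul (hf : HasCubicExpansion l f a₀ a₁ a₂ a₃) (c : ℝ) :
    HasCubicExpansion l (fun s => c * f s) (c * a₀) (c * a₁) (c * a₂) (c * a₃) :=
  (hf.const_mul_left c).congr_left fun s => by ring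

theorem congr_of_eventuallyEq (hf : HasCubicExpansion l f a₀ a₁ a₂ a₃) (hg : g =ᶠ[l] f) :
    HasCubicExpansion l g a₀ a₁ a₂ a₃ :=
  hf.congr' (hg.mono fun s hs => by simp [hs]) EventuallyEq.rfl

theorem congr_isLittleO (hf : HasCubicExpansion l f a₀ a₁ a₂ a₃)
    (hgf : (fun s => g s - f s) =o[l] fun s => s ^ 3) : HasCubicExpansion l g a₀ a₁ a₂ a₃ :=
  (hgf.add hf).congr_left fun s => by ring

theorem tendsto (hl : l ≤ 𝓝 0) (hf : HasCubicExpansion l f a₀ a₁ a₂ a₃) :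
    Tendsto f l (𝓝 a₀) := by
  have hpoly : Tendsto (fun s : ℝ => a₀ + a₁ * s + a₂ * s ^ 2 + a₃ * s ^ 3) l (𝓝 a₀) :=
    ((by fun_prop : Continuous fun s : ℝ => a₀ + a₁ * s + a₂ * s ^ 2 + a₃ * s ^ 3).tendsto' 0 a₀
      (by simp)).mono_left hl
  have hcube : Tendsto (fun s : ℝ => s ^ 3) l (𝓝 0) :=
    ((continuous_pow 3).tendsto' (0 : ℝ) 0 (by simp)).mono_left hl
  simpa using (hf.trans_tendsto hcube).add hpoly

theorem isBigO_pow_three (hf : HasCubicExpansion l f 0 0 0 a₃) : f =O[l] fun s => s ^ 3 := by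
  simpa using hf.isBigO.add ((isBigO_refl (fun s : ℝ => s ^ 3) l).const_mul_left a₃)

theorem mul (hl : l ≤ 𝓝 0) (hf : HasCubicExpansion l f a₀ a₁ a₂ a₃)
    (hg : HasCubicExpansion l g b₀ b₁ b₂ b₃) :
    HasCubicExpansion l (fun s => f s * g s) (a₀ * b₀) (a₀ * b₁ + a₁ * b₀)
      (a₀ * b₂ + a₁ * b₁ + a₂ * b₀) (a₀ * b₃ + a₁ * b₂ + a₂ * b₁ + a₃ * b₀) := by
  have hfO : f =O[l] fun _ => (1 : ℝ) := (hf.tendsto hl).isBigO_one ℝ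
  have hqO : (fun s => b₀ + b₁ * s + b₂ * s ^ 2 + b₃ * s ^ 3) =O[l] fun _ => (1 : ℝ) :=
    (((by fun_prop : Continuous fun s : ℝ => b₀ + b₁ * s + b₂ * s ^ 2 + b₃ * s ^ 3).tendsto
      0).mono_left hl).isBigO_one ℝ
  -- With `p`, `q` the polynomial parts, `f g - p q = f (g - q) + q (f - p)`,
  -- and `p q` exceeds its truncation by `s⁴` times a polynomial.
  have hprod := (hfO.mul_isLittleO hg).add (hqO.mul_isLittleO hf)
  simp only [one_mul] at hprod
  have htrunc := isLittleO_pow_four_mul hl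
    (R := fun s => a₁ * b₃ + a₂ * b₂ + a₃ * b₁ + (a₂ * b₃ + a₃ * b₂) * s + a₃ * b₃ * s ^ 2)
    (by fun_prop)
  exact (hprod.add htrunc).congr_left fun s => by ring

end HasCubicExpansion

theorem ContDiffAt.hasCubicExpansion_taylor {g : ℝ → ℝ} {a : ℝ} (hg : ContDiffAt ℝ 3 g a) :
    ∃ g₂ g₃ : ℝ, HasCubicExpansion (𝓝 0) (fun t => g (a + t)) (g a) (deriv g a) g₂ g₃ := by
  obtain ⟨u, hu, hgu⟩ := hg.contDiffOn le_rfl (by simp)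
  obtain ⟨ε, hε, hball⟩ := Metric.mem_nhds_iff.1 hu
  have ha : a ∈ Metric.ball a ε := Metric.mem_ball_self hε
  have htaylor := taylor_isLittleO (convex_ball a ε) ha (hgu.mono hball)
  rw [Metric.isOpen_ball.nhdsWithin_eq ha] at htaylor
  have hshift : Tendsto (fun t : ℝ => a + t) (𝓝 0) (𝓝 a) := by
    simpa using (continuous_const_add a).tendsto 0
  have h1 : iteratedDerivWithin 1 g (Metric.ball a ε) a = deriv g a := by
    rw [iteratedDerivWithin_one, derivWithin_of_isOpen Metric.isOpen_ball ha]
  refine ⟨iteratedDerivWithin 2 g (Metric.ball a ε) a / 2,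
    iteratedDerivWithin 3 g (Metric.ball a ε) a / 6,
    (htaylor.comp_tendsto hshift).congr (fun t => ?_) (fun t => by simp)⟩
  simp only [Function.comp_apply, taylorWithinEval_succ, taylor_within_zero_eval, h1, smul_eq_mul,
    add_sub_cancel_left]
  norm_num [Nat.factorial]
  ring

theorem ContDiffAt.hasCubicExpansion_comp {l : Filter ℝ} {g φ : ℝ → ℝ} {a b₁ b₂ b₃ : ℝ}
    (hg : ContDiffAt ℝ 3 g a) (hl : l ≤ 𝓝 0) (hφ : HasCubicExpansion l φ a b₁ b₂ b₃) :
    ∃ c₂ c₃ : ℝ, HasCubicExpansion l (fun s => g (φ s)) (g a) (deriv g a * b₁) c₂ c₃ := by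
  obtain ⟨g₂, g₃, hT⟩ := hg.hasCubicExpansion_taylor
  have ht : HasCubicExpansion l (fun s => φ s - a) 0 b₁ b₂ b₃ := by
    simpa using hφ.sub (hasCubicExpansion_const l a)
  have ht2 := ht.mul hl ht
  have ht3 := ht2.mul hl ht
  have hpoly := (((hasCubicExpansion_const l (g a)).add (ht.const_mul (deriv g a))).add
    (ht2.const_mul g₂)).add (ht3.const_mul g₃)
  simp only [zero_mul, mul_zero, add_zero, zero_add] at ht3 hpoly
  -- The Taylor remainder is `o((φ s - a)³)`, and `(φ s - a)³ = O(s³)`.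
  have hrem := (hT.comp_tendsto (ht.tendsto hl)).trans_isBigO
    (ht3.isBigO_pow_three.congr_left fun s => by simp only [Function.comp_apply]; ring)
  refine ⟨_, _, hpoly.congr_isLittleO (hrem.congr_left fun s => ?_)⟩
  simp only [Function.comp_apply, add_sub_cancel]
  ring

theorem tendsto_nhdsGT_iff_tendsto_add_sq {β : Type*} {F : ℝ → β} {ζ : ℝ} {l' : Filter β} :
    Tendsto F (𝓝[>] ζ) l' ↔ Tendsto (fun s => F (ζ + s ^ 2)) (𝓝[>] 0) l' := by
  have hsq : Tendsto (fun s : ℝ => ζ + s ^ 2) (𝓝[>] 0) (𝓝[>] ζ) := by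
    refine tendsto_nhdsWithin_of_tendsto_nhds_of_eventually_within _ ?_ ?_
    · exact ((by fun_prop : Continuous fun s : ℝ => ζ + s ^ 2).tendsto' 0 ζ (by simp)).mono_left
        nhdsWithin_le_nhds
    · filter_upwards [self_mem_nhdsWithin] with s (hs : 0 < s)
      simpa using pow_pos hs 2
  have hsqrt : Tendsto (fun ϑ => √(ϑ - ζ)) (𝓝[>] ζ) (𝓝[>] 0) := by
    refine tendsto_nhdsWithin_of_tendsto_nhds_of_eventually_within _ ?_ ?_
    · exact ((by fun_prop : Continuous fun ϑ : ℝ => √(ϑ - ζ)).tendsto' ζ 0 (by simp)).mono_left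
        nhdsWithin_le_nhds
    · filter_upwards [self_mem_nhdsWithin] with ϑ (hϑ : ζ < ϑ)
      exact Real.sqrt_pos.2 (sub_pos.2 hϑ)
  refine ⟨fun h => h.comp hsq, fun h => (h.comp hsqrt).congr' ?_⟩
  filter_upwards [self_mem_nhdsWithin] with ϑ (hϑ : ζ < ϑ)
  simp [Real.sq_sqrt (sub_nonneg.2 hϑ.le)]

theorem tendsto_puiseux_remainder_iff_hasCubicExpansion {f : ℝ → ℝ} {ζ c₀ c₁ c₂ c₃ : ℝ} :
    Tendsto (fun ϑ => (f ϑ - (c₀ + c₁ * √(ϑ - ζ) + c₂ * (ϑ - ζ) + c₃ * (ϑ - ζ) ^ ((3 : ℝ) / 2)))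
      / (ϑ - ζ) ^ ((3 : ℝ) / 2)) (𝓝[>] ζ) (𝓝 0) ↔
    HasCubicExpansion (𝓝[>] 0) (fun s => f (ζ + s ^ 2)) c₀ c₁ c₂ c₃ := by
  have hpos : ∀ᶠ s in 𝓝[>] (0 : ℝ), 0 < s := self_mem_nhdsWithin
  rw [tendsto_nhdsGT_iff_tendsto_add_sq, HasCubicExpansion,
    isLittleO_iff_tendsto' (hpos.mono fun s hs h => absurd h (pow_pos hs 3).ne')]
  refine tendsto_congr' (hpos.mono fun s hs => ?_)
  have h32 : (s ^ 2) ^ ((3 : ℝ) / 2) = s ^ 3 := by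
    rw [← Real.rpow_natCast_mul hs.le]
    norm_num
  simp only [add_sub_cancel_left, Real.sqrt_sq hs.le, h32]

theorem deriv_add_div_comp_add {ψ : ℝ → ℝ} {α x : ℝ} (hψ : DifferentiableAt ℝ ψ (α + x))
    (hne : ψ (α + x) ≠ 0) :
    deriv (fun y => (α + y) / ψ (α + y)) x
      = (ψ (α + x) - (α + x) * deriv ψ (α + x)) / ψ (α + x) ^ 2 := by
  have hshift : HasDerivAt (fun y => α + y) 1 x := (hasDerivAt_id x).const_add α
  refine (hshift.div (hψ.hasDerivAt.comp x hshift) hne).deriv.trans ?_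
  simp only [Function.comp_apply]
  ring

theorem master_transform_expansion_spectrally_positive_general
    (ψhat Φhat : ℝ → ℝ) (ϑstar ζstar δ B₁ B₂ B₃ α β : ℝ) (hδ : 0 < δ)
    (hsmooth : ∃ U ∈ nhds (α + ϑstar), ContDiffOn ℝ 3 ψhat U)
    (hne₁ : ψhat (α + ϑstar) ≠ 0) (hne₃ : ψhat β ≠ ζstar)
    (hΦ : Tendsto
      (fun ϑ => (Φhat ϑ - (ϑstar + B₁ * Real.sqrt (ϑ - ζstar) + B₂ * (ϑ - ζstar)
          + B₃ * (ϑ - ζstar) ^ ((3 : ℝ) / 2))) / (ϑ - ζstar) ^ ((3 : ℝ) / 2))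
      (nhdsWithin ζstar (Ioi ζstar)) (nhds 0))
    (L : ℝ → ℝ)
    (hL : ∀ ϑ ∈ Ioo ζstar (ζstar + δ),
      L ϑ = (deriv ψhat 0 / (ϑ - ψhat β))
        * ((α + β) / ψhat (α + β) - (α + Φhat ϑ) / ψhat (α + Φhat ϑ)))
    (C₀ C₁ : ℝ)
    (hC₀ : C₀ = ((α + β) / ψhat (α + β) - (α + ϑstar) / ψhat (α + ϑstar))
        * deriv ψhat 0 / (ζstar - ψhat β))
    (hC₁ : C₁ = -(deriv ψhat 0) * B₁
        * (ψhat (α + ϑstar) - (α + ϑstar) * deriv ψhat (α + ϑstar))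
        / (ψhat (α + ϑstar) ^ 2 * (ζstar - ψhat β))) :
    ∃ C₂ C₃ : ℝ,
      Tendsto
        (fun ϑ => (L ϑ - (C₀ + C₁ * Real.sqrt (ϑ - ζstar) + C₂ * (ϑ - ζstar)
            + C₃ * (ϑ - ζstar) ^ ((3 : ℝ) / 2))) / (ϑ - ζstar) ^ ((3 : ℝ) / 2))
        (nhdsWithin ζstar (Ioi ζstar)) (nhds 0) := by
  obtain ⟨U, hU, hψU⟩ := hsmooth
  set G : ℝ → ℝ := fun x => (α + x) / ψhat (α + x)
  set P : ℝ → ℝ := fun x => deriv ψhat 0 / (ζstar + x - ψhat β)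
  have hl : 𝓝[>] (0 : ℝ) ≤ 𝓝 0 := nhdsWithin_le_nhds
  have hψ : ContDiffAt ℝ 3 ψhat (α + ϑstar) := hψU.contDiffAt hU
  have hG : ContDiffAt ℝ 3 G ϑstar := (contDiffAt_const.add contDiffAt_id).div
    (hψ.comp ϑstar (contDiffAt_const.add contDiffAt_id)) hne₁
  have hG' : deriv G ϑstar = _ := deriv_add_div_comp_add (hψ.differentiableAt (by norm_num)) hne₁
  have hP : ContDiffAt ℝ 3 P 0 :=
    contDiffAt_const.div (by fun_prop) (by simpa [sub_eq_zero] using hne₃.symm)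
  obtain ⟨a₂, a₃, hGΦ⟩ := hG.hasCubicExpansion_comp hl
    (tendsto_puiseux_remainder_iff_hasCubicExpansion.1 hΦ)
  obtain ⟨b₂, b₃, hPs⟩ := hP.hasCubicExpansion_comp hl (hasCubicExpansion_sq _)
  have hLs := hPs.mul hl ((hasCubicExpansion_const _ ((α + β) / ψhat (α + β))).sub hGΦ)
  simp only [mul_zero, zero_mul, add_zero, zero_sub] at hLs
  rw [show P 0 * ((α + β) / ψhat (α + β) - G ϑstar) = C₀ by simp only [P, G, hC₀]; ring,
    show P 0 * -(deriv G ϑstar * B₁) = C₁ by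
      simp only [P, hG', hC₁, add_zero, div_eq_mul_inv, mul_inv]; ring] at hLs
  have hLeq : (fun s => L (ζstar + s ^ 2)) =ᶠ[𝓝[>] 0]
      fun s => P (s ^ 2) * ((α + β) / ψhat (α + β) - G (Φhat (ζstar + s ^ 2))) := by
    have hsmall : ∀ᶠ s in 𝓝 (0 : ℝ), s ^ 2 < δ :=
      ((continuous_pow 2).tendsto' (0 : ℝ) 0 (by simp)).eventually (gt_mem_nhds hδ)
    filter_upwards [hsmall.filter_mono hl, self_mem_nhdsWithin] with s hsδ (hs : 0 < s)
    exact hL _ ⟨by simpa using pow_pos hs 2, by simpa using hsδ⟩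
  exact ⟨_, _, tendsto_puiseux_remainder_iff_hasCubicExpansion.2 (hLs.congr_of_eventuallyEq hLeq)⟩

/-- Spectrally positive case of Proposition 3.1: expansion of the master transform
`L(ϑ) = (ψ̂'(0)/(ϑ − ψ̂(β))) ((α+β)/ψ̂(α+β) − (α+Φ̂(ϑ))/ψ̂(α+Φ̂(ϑ)))` at `ζ*`. -/
theorem master_transform_expansion_spectrally_positive
    (ψhat Φhat : ℝ → ℝ) (ϑstar ζstar δ B₁ B₂ B₃ α β : ℝ) (hδ : 0 < δ)
    (hα : 0 ≤ α) (hβ : 0 ≤ β)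
    (hsmooth : ∃ U ∈ nhds (α + ϑstar), ContDiffOn ℝ 3 ψhat U)
    (hdiff0 : DifferentiableAt ℝ ψhat 0)
    (hne₁ : ψhat (α + ϑstar) ≠ 0) (hne₂ : ψhat (α + β) ≠ 0) (hne₃ : ψhat β ≠ ζstar)
    (hΦ : Tendsto
      (fun ϑ => (Φhat ϑ - (ϑstar + B₁ * Real.sqrt (ϑ - ζstar) + B₂ * (ϑ - ζstar)
          + B₃ * (ϑ - ζstar) ^ ((3 : ℝ) / 2))) / (ϑ - ζstar) ^ ((3 : ℝ) / 2))
      (nhdsWithin ζstar (Ioi ζstar)) (nhds 0))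
    (L : ℝ → ℝ)
    (hL : ∀ ϑ ∈ Ioo ζstar (ζstar + δ),
      L ϑ = (deriv ψhat 0 / (ϑ - ψhat β))
        * ((α + β) / ψhat (α + β) - (α + Φhat ϑ) / ψhat (α + Φhat ϑ)))
    (C₀ C₁ : ℝ)
    (hC₀ : C₀ = ((α + β) / ψhat (α + β) - (α + ϑstar) / ψhat (α + ϑstar))
        * deriv ψhat 0 / (ζstar - ψhat β))
    (hC₁ : C₁ = -(deriv ψhat 0) * B₁
        * (ψhat (α + ϑstar) - (α + ϑstar) * deriv ψhat (α + ϑstar))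
        / (ψhat (α + ϑstar) ^ 2 * (ζstar - ψhat β))) :
    ∃ C₂ C₃ : ℝ,
      Tendsto
        (fun ϑ => (L ϑ - (C₀ + C₁ * Real.sqrt (ϑ - ζstar) + C₂ * (ϑ - ζstar)
            + C₃ * (ϑ - ζstar) ^ ((3 : ℝ) / 2))) / (ϑ - ζstar) ^ ((3 : ℝ) / 2))
        (nhdsWithin ζstar (Ioi ζstar)) (nhds 0) :=
  master_transform_expansion_spectrally_positive_general ψhat Φhat ϑstar ζstar δ B₁ B₂ B₃ α β hδ
    hsmooth hne₁ hne₃ hΦ L hL C₀ C₁ hC₀ hC₁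
end
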